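/- (Lemma 2) In the finite MDP setup, for any two policies π and π', the ℓ1 divergence between their discounted future state visitation distributions is bounded by an average policy divergence: Σ_s |d^{π'}(s) − d^π(s)| ≤ (2γ/(1−γ)) Σ_s d^π(s) D_TV(π'||π)[s]. -/

import Mathlib

/-! Proof idea: `d^π` solves `(I - γ P_π) d^π = (1 - γ) μ`, so
`(I - γ P_{π'}) (d^{π'} - d^π) = γ (P_{π'} - P_π) d^π`. A column-stochastic `M` does not increase
the `ℓ¹` norm, hence `(1 - γ) ‖x‖₁ ≤ ‖(I - γ M) x‖₁`; and `‖(P_{π'} - P_π) d^π‖₁` is at most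
`Σ_s d^π(s) Σ_a |π'(a|s) - π(a|s)| = 2 Σ_s d^π(s) D_TV(π'||π)[s]`. -/

open Finset Matrix

noncomputable section

/-- The state-transition matrix of policy `π`: `(Pmat P π) s' s = Σ_a P(s'|s,a) π(a|s)`. -/
def Pmat {S A : Type*} [Fintype A] (P : S → A → S → ℝ) (π : S → A → ℝ) : Matrix S S ℝ :=
  Matrix.of fun s' s => ∑ a, P s a s' * π s a

/-- The discounted future state distribution `d^π = (1-γ)(I - γ P_π)⁻¹ μ`. -/
def dpi {S A : Type*} [Fintype S] [Fintype A] [DecidableEq S]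
    (γ : ℝ) (P : S → A → S → ℝ) (μ : S → ℝ) (π : S → A → ℝ) : S → ℝ :=
  (1 - γ) • ((1 - γ • Pmat P π)⁻¹).mulVec μ

/-- The per-state total variational divergence `D_TV(π'||π)[s] = (1/2) Σ_a |π'(a|s) - π(a|s)|`. -/
def DTV {S A : Type*} [Fintype A] (π' π : S → A → ℝ) (s : S) : ℝ :=
  (1 / 2) * ∑ a, |π' s a - π s a|

namespace Matrix

variable {m n : Type*} [Fintype n]

theorem abs_mulVec_apply_le (N : Matrix m n ℝ) (v : n → ℝ) (i : m) :
    |(N *ᵥ v) i| ≤ ∑ j, |N i j| * |v j| := by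
  simpa only [mulVec, dotProduct, abs_mul] using abs_sum_le_sum_abs (fun j => N i j * v j) univ

variable [DecidableEq n] {M : Matrix n n ℝ}

theorem apply_eq_one_sub_smul_mulVec_add (γ : ℝ) (x : n → ℝ) (i : n) :
    x i = ((1 - γ • M) *ᵥ x) i + γ * (M *ᵥ x) i := by
  simp [sub_mulVec, smul_mulVec]

theorem sum_abs_mulVec_le_of_mem_colStochastic (hM : M ∈ colStochastic ℝ n) (v : n → ℝ) :
    ∑ i, |(M *ᵥ v) i| ≤ ∑ i, |v i| :=
  calc ∑ i, |(M *ᵥ v) i| ≤ ∑ i, ∑ j, |M i j| * |v j| :=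
        sum_le_sum fun i _ => abs_mulVec_apply_le M v i
    _ = ∑ i, (M *ᵥ fun j => |v j|) i := by
        simp only [abs_of_nonneg (nonneg_of_mem_colStochastic hM), mulVec, dotProduct]
    _ = ∑ i, |v i| := sum_mulVec_of_mem_colStochastic hM

theorem one_sub_mul_sum_abs_le_of_mem_colStochastic (hM : M ∈ colStochastic ℝ n) {γ : ℝ}
    (hγ : 0 ≤ γ) (x : n → ℝ) :
    (1 - γ) * ∑ i, |x i| ≤ ∑ i, |((1 - γ • M) *ᵥ x) i| := by
  have hMx := sum_abs_mulVec_le_of_mem_colStochastic hM x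
  have : ∑ i, |x i| ≤ ∑ i, |((1 - γ • M) *ᵥ x) i| + γ * ∑ i, |(M *ᵥ x) i| :=
    calc ∑ i, |x i| ≤ ∑ i, (|((1 - γ • M) *ᵥ x) i| + γ * |(M *ᵥ x) i|) := by
          refine sum_le_sum fun i _ => ?_
          rw [apply_eq_one_sub_smul_mulVec_add γ x i]
          refine (abs_add_le _ _).trans_eq ?_
          rw [abs_mul, abs_of_nonneg hγ]
      _ = _ := by rw [sum_add_distrib, mul_sum]
  nlinarith

theorem isUnit_one_sub_smul_of_mem_colStochastic (hM : M ∈ colStochastic ℝ n) {γ : ℝ}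
    (hγ0 : 0 ≤ γ) (hγ1 : γ < 1) : IsUnit (1 - γ • M) := by
  refine mulVec_injective_iff_isUnit.mp fun x y hxy => ?_
  have hsub : (1 - γ • M) *ᵥ (x - y) = 0 := by rw [mulVec_sub, hxy, sub_self]
  have h := one_sub_mul_sum_abs_le_of_mem_colStochastic hM hγ0 (x - y)
  simp only [hsub, Pi.zero_apply, abs_zero, sum_const_zero] at h
  have hzero : ∑ i, |(x - y) i| = 0 :=
    le_antisymm (nonpos_of_mul_nonpos_right h (by linarith)) (sum_nonneg fun i _ => abs_nonneg _)
  funext i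
  have := (sum_eq_zero_iff_of_nonneg fun i _ => abs_nonneg ((x - y) i)).mp hzero i (mem_univ i)
  simpa [sub_eq_zero] using this

/-- The negative part `y` of `x` satisfies `y ≤ γ M y`, which forces `‖y‖₁ ≤ γ ‖y‖₁`. -/
theorem nonneg_of_one_sub_smul_mulVec_nonneg (hM : M ∈ colStochastic ℝ n) {γ : ℝ}
    (hγ0 : 0 ≤ γ) (hγ1 : γ < 1) {x : n → ℝ} (hx : ∀ i, 0 ≤ ((1 - γ • M) *ᵥ x) i) (i : n) :
    0 ≤ x i := by
  set y : n → ℝ := fun i => max (-x i) 0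
  have hy0 : ∀ i, 0 ≤ y i := fun i => le_max_right _ _
  have hMy : ∀ i, -(M *ᵥ x) i ≤ (M *ᵥ y) i := fun i => by
    have := nonneg_mulVec_of_mem_colStochastic hM (x := x + y)
      (fun j => by simp only [Pi.add_apply, y]; linarith [le_max_left (-x j) 0]) i
    rw [mulVec_add, Pi.add_apply] at this
    linarith
  have hy : ∀ i, y i ≤ γ * (M *ᵥ y) i := fun i => by
    have hxi := apply_eq_one_sub_smul_mulVec_add (M := M) γ x i
    refine max_le ?_ (mul_nonneg hγ0 (nonneg_mulVec_of_mem_colStochastic hM hy0 i))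
    nlinarith [hx i, hMy i]
  have hsum : ∑ i, y i ≤ γ * ∑ i, y i := by
    calc ∑ i, y i ≤ ∑ i, γ * (M *ᵥ y) i := sum_le_sum fun i _ => hy i
      _ = γ * ∑ i, y i := by rw [← mul_sum, sum_mulVec_of_mem_colStochastic hM]
  have hzero : ∑ i, y i = 0 := by
    have := sum_nonneg fun i (_ : i ∈ univ) => hy0 i
    nlinarith
  have := (sum_eq_zero_iff_of_nonneg fun i _ => hy0 i).mp hzero i (mem_univ i)
  simpa only [y, max_eq_right_iff, neg_nonpos] using this

end Matrix

section MDP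

variable {S A : Type*} [Fintype S] [Fintype A] {P : S → A → S → ℝ}

theorem sum_abs_Pmat_sub_mulVec_le (hP0 : ∀ s a s', 0 ≤ P s a s')
    (hP1 : ∀ s a, ∑ s', P s a s' = 1) (π π' : S → A → ℝ) {d : S → ℝ} (hd : ∀ s, 0 ≤ d s) :
    ∑ t, |((Pmat P π' - Pmat P π) *ᵥ d) t| ≤ 2 * ∑ s, d s * DTV π' π s := by
  have hentry : ∀ t s, |(Pmat P π' - Pmat P π) t s| ≤ ∑ a, P s a t * |π' s a - π s a| :=
    fun t s => by
      simp only [Matrix.sub_apply, Pmat, of_apply, ← sum_sub_distrib, ← mul_sub]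
      refine (abs_sum_le_sum_abs _ _).trans_eq (sum_congr rfl fun a _ => ?_)
      rw [abs_mul, abs_of_nonneg (hP0 s a t)]
  calc ∑ t, |((Pmat P π' - Pmat P π) *ᵥ d) t|
      ≤ ∑ t, ∑ s, (∑ a, P s a t * |π' s a - π s a|) * d s := by
        refine sum_le_sum fun t _ => (abs_mulVec_apply_le _ d t).trans (sum_le_sum fun s _ => ?_)
        rw [abs_of_nonneg (hd s)]
        exact mul_le_mul_of_nonneg_right (hentry t s) (hd s)
    _ = ∑ s, d s * ∑ a, |π' s a - π s a| := by
        rw [sum_comm]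
        refine sum_congr rfl fun s _ => ?_
        simp only [← sum_mul, mul_comm (d s)]
        rw [sum_comm]
        exact congrArg (· * d s) (sum_congr rfl fun a _ => by rw [← sum_mul, hP1 s a, one_mul])
    _ = 2 * ∑ s, d s * DTV π' π s := by
        rw [mul_sum]
        exact sum_congr rfl fun s _ => by rw [DTV]; ring

variable [DecidableEq S]

theorem Pmat_mem_colStochastic (hP0 : ∀ s a s', 0 ≤ P s a s') (hP1 : ∀ s a, ∑ s', P s a s' = 1)
    {π : S → A → ℝ} (hπ0 : ∀ s a, 0 ≤ π s a) (hπ1 : ∀ s, ∑ a, π s a = 1) :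
    Pmat P π ∈ colStochastic ℝ S := by
  refine mem_colStochastic_iff_sum.mpr ⟨fun s' s => ?_, fun s => ?_⟩
  · exact sum_nonneg fun a _ => mul_nonneg (hP0 s a s') (hπ0 s a)
  · simp only [Pmat, of_apply]
    rw [sum_comm, ← hπ1 s]
    exact sum_congr rfl fun a _ => by rw [← sum_mul, hP1 s a, one_mul]

theorem one_sub_smul_Pmat_mulVec_dpi {γ : ℝ} (hγ0 : 0 ≤ γ) (hγ1 : γ < 1) (μ : S → ℝ)
    {π : S → A → ℝ} (hπ : Pmat P π ∈ colStochastic ℝ S) :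
    (1 - γ • Pmat P π) *ᵥ dpi γ P μ π = (1 - γ) • μ := by
  have hdet := (isUnit_iff_isUnit_det _).mp (isUnit_one_sub_smul_of_mem_colStochastic hπ hγ0 hγ1)
  rw [dpi, mulVec_smul, mulVec_mulVec, mul_nonsing_inv _ hdet, one_mulVec]

theorem dpi_nonneg {γ : ℝ} (hγ0 : 0 ≤ γ) (hγ1 : γ < 1) {μ : S → ℝ} (hμ0 : ∀ s, 0 ≤ μ s)
    {π : S → A → ℝ} (hπ : Pmat P π ∈ colStochastic ℝ S) (s : S) :
    0 ≤ dpi γ P μ π s := by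
  refine nonneg_of_one_sub_smul_mulVec_nonneg hπ hγ0 hγ1 (fun t => ?_) s
  rw [one_sub_smul_Pmat_mulVec_dpi hγ0 hγ1 μ hπ, Pi.smul_apply, smul_eq_mul]
  exact mul_nonneg (by linarith) (hμ0 t)

theorem one_sub_smul_Pmat_mulVec_dpi_sub {γ : ℝ} (hγ0 : 0 ≤ γ) (hγ1 : γ < 1) (μ : S → ℝ)
    {π π' : S → A → ℝ} (hπ : Pmat P π ∈ colStochastic ℝ S)
    (hπ' : Pmat P π' ∈ colStochastic ℝ S) :
    (1 - γ • Pmat P π') *ᵥ (dpi γ P μ π' - dpi γ P μ π)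
      = γ • ((Pmat P π' - Pmat P π) *ᵥ dpi γ P μ π) := by
  rw [mulVec_sub, one_sub_smul_Pmat_mulVec_dpi hγ0 hγ1 μ hπ',
    ← one_sub_smul_Pmat_mulVec_dpi hγ0 hγ1 μ hπ, ← sub_mulVec, ← smul_mulVec, smul_sub]
  congr 1
  abel

end MDP

theorem stmt_9_general {S A : Type*} [Fintype S] [Fintype A] [DecidableEq S]
    (γ : ℝ) (hγ0 : 0 ≤ γ) (hγ1 : γ < 1)
    (P : S → A → S → ℝ) (hP0 : ∀ s a s', 0 ≤ P s a s') (hP1 : ∀ s a, ∑ s', P s a s' = 1)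
    (μ : S → ℝ) (hμ0 : ∀ s, 0 ≤ μ s)
    (π π' : S → A → ℝ)
    (hπ0 : ∀ s a, 0 ≤ π s a) (hπ1 : ∀ s, ∑ a, π s a = 1)
    (hπ'0 : ∀ s a, 0 ≤ π' s a) (hπ'1 : ∀ s, ∑ a, π' s a = 1) :
    ∑ s, |dpi γ P μ π' s - dpi γ P μ π s|
      ≤ (2 * γ / (1 - γ)) * ∑ s, dpi γ P μ π s * DTV π' π s := by
  have hπ := Pmat_mem_colStochastic hP0 hP1 hπ0 hπ1
  have hπ' := Pmat_mem_colStochastic hP0 hP1 hπ'0 hπ'1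
  have hdiff := one_sub_mul_sum_abs_le_of_mem_colStochastic hπ' hγ0
    (dpi γ P μ π' - dpi γ P μ π)
  rw [one_sub_smul_Pmat_mulVec_dpi_sub hγ0 hγ1 μ hπ hπ'] at hdiff
  have hw := sum_abs_Pmat_sub_mulVec_le hP0 hP1 π π' (dpi_nonneg hγ0 hγ1 hμ0 hπ)
  simp only [Pi.smul_apply, Pi.sub_apply, smul_eq_mul, abs_mul, abs_of_nonneg hγ0,
    ← mul_sum] at hdiff
  rw [div_mul_eq_mul_div, le_div_iff₀ (by linarith)]
  nlinarith

theorem stmt_9 {S A : Type*} [Fintype S] [Fintype A] [Nonempty S] [Nonempty A] [DecidableEq S]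
    (γ : ℝ) (hγ0 : 0 ≤ γ) (hγ1 : γ < 1)
    (P : S → A → S → ℝ) (hP0 : ∀ s a s', 0 ≤ P s a s') (hP1 : ∀ s a, ∑ s', P s a s' = 1)
    (μ : S → ℝ) (hμ0 : ∀ s, 0 ≤ μ s) (hμ1 : ∑ s, μ s = 1)
    (π π' : S → A → ℝ)
    (hπ0 : ∀ s a, 0 ≤ π s a) (hπ1 : ∀ s, ∑ a, π s a = 1)
    (hπ'0 : ∀ s a, 0 ≤ π' s a) (hπ'1 : ∀ s, ∑ a, π' s a = 1) :
    ∑ s, |dpi γ P μ π' s - dpi γ P μ π s|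
      ≤ (2 * γ / (1 - γ)) * ∑ s, dpi γ P μ π s * DTV π' π s :=
  stmt_9_general γ hγ0 hγ1 P hP0 hP1 μ hμ0 π π' hπ0 hπ1 hπ'0 hπ'1
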